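/- Define S_{C1,C2}(x) = Σ_{m,n≥0} q^{2·C(m+1,2)+C(n+1,2)+mn+C1·m+C2·n} x^{m+n} / ((q;q)_m (q;q)_n). Then S_{0,0}(x) = S_{0,0}(xq) + (xq+xq²) S_{1,0}(xq) and S_{1,0}(x) = S_{0,0}(xq) + xq S_{1,0}(xq). -/

import Mathlib

noncomputable section

/-- Base coefficient ring: formal Laurent series over ℚ (a field), so that
integer powers of `q` and inverses of Pochhammer symbols make sense. -/
abbrev R : Type := LaurentSeries ℚ

/-- The formal variable `q`. -/
def q : R := HahnSeries.single 1 1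

/-- The finite q-Pochhammer symbol `(a; b)_n = ∏_{j=1}^n (1 - a b^(j-1))`. -/
def poch (a b : R) (n : ℕ) : R := ∏ j ∈ Finset.range n, (1 - a * b ^ j)

/-- Formal substitution `x ↦ c·x` in a power series in `x` over `R`. -/
def subst (c : R) (f : PowerSeries R) : PowerSeries R :=
  PowerSeries.mk fun k => c ^ k * PowerSeries.coeff k f

/-- `S_{C1,C2}(x) = Σ_{m,n} q^{2C(m+1,2)+C(n+1,2)+mn+C1 m+C2 n} x^{{m+n}}
/((q;q)_m (q;q)_n)`, as a power series in `x` over `R`. -/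
def S (C1 C2 : ℤ) : PowerSeries R :=
  PowerSeries.mk fun k =>
    ∑ p ∈ (Finset.range (k+1) ×ˢ Finset.range (k+1)).filter
        (fun p => p.1 + p.2 = k),
      q ^ (2 * ((p.1+1).choose 2 : ℤ) + ((p.2+1).choose 2 : ℤ)
            + (p.1 : ℤ) * (p.2 : ℤ) + C1 * (p.1 : ℤ) + C2 * (p.2 : ℤ))
        * (poch q q p.1)⁻¹ * (poch q q p.2)⁻¹

/-!
Let `t_{C1,C2}(m,n)` be the `(m,n)` summand of `S_{C1,C2}`. Raising `C1` (resp. `C2`) by one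
multiplies it by `q^m` (resp. `q^n`), while cancelling the last Pochhammer factor gives
`(1 - q^{m+1}) t_{C1,C2}(m+1,n) = q^{C1+2} t_{C1+2,C2+1}(m,n)` and
`(1 - q^{n+1}) t_{C1,C2}(m,n+1) = q^{C2+1} t_{C1+1,C2+1}(m,n)`. Summing over `m + n = k` yields
`S_{C1,C2} = S_{C1+1,C2} + x q^{C1+2} S_{C1+2,C2+1}` and
`S_{C1,C2} = S_{C1,C2+1} + x q^{C2+1} S_{C1+1,C2+1}`, and `x ↦ xq` sends `S_{C1,C2}` to
`S_{C1+1,C2+1}`. The system is these recurrences at `(C1, C2) = (0, 0)` and `(1, 0)`.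
-/

open Finset
open PowerSeries hiding subst

def sTerm (C1 C2 : ℤ) (m n : ℕ) : R :=
  q ^ (2 * ((m+1).choose 2 : ℤ) + ((n+1).choose 2 : ℤ)
        + (m : ℤ) * (n : ℤ) + C1 * (m : ℤ) + C2 * (n : ℤ))
    * (poch q q m)⁻¹ * (poch q q n)⁻¹

lemma q_ne_zero : q ≠ 0 := by simp [q]

lemma one_sub_q_pow_ne_zero {n : ℕ} (hn : n ≠ 0) : 1 - q ^ n ≠ 0 := by
  rw [sub_ne_zero, q, HahnSeries.single_pow, one_pow, ← HahnSeries.single_zero_one]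
  intro h
  have h0 := congrArg (fun f : R => f.coeff 0) h
  simp [HahnSeries.coeff_single] at h0
  omega

lemma poch_succ (n : ℕ) : poch q q (n + 1) = poch q q n * (1 - q ^ (n + 1)) := by
  rw [poch, prod_range_succ, ← pow_succ']
  rfl

lemma coeff_S (C1 C2 : ℤ) (k : ℕ) :
    coeff k (S C1 C2) = ∑ p ∈ antidiagonal k, sTerm C1 C2 p.1 p.2 := by
  rw [S, coeff_mk]
  refine sum_congr ?_ fun _ _ => rfl
  ext p
  simp only [mem_filter, mem_product, mem_range, HasAntidiagonal.mem_antidiagonal]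
  omega

lemma coeff_zero_S (C1 C2 : ℤ) : coeff 0 (S C1 C2) = 1 := by
  simp [coeff_S, sTerm, poch]

lemma sTerm_add_one_left (C1 C2 : ℤ) (m n : ℕ) :
    sTerm (C1 + 1) C2 m n = q ^ m * sTerm C1 C2 m n := by
  rw [sTerm, sTerm, ← zpow_natCast, ← mul_assoc, ← mul_assoc, ← zpow_add₀ q_ne_zero]
  ring_nf

lemma sTerm_add_one_right (C1 C2 : ℤ) (m n : ℕ) :
    sTerm C1 (C2 + 1) m n = q ^ n * sTerm C1 C2 m n := by
  rw [sTerm, sTerm, ← zpow_natCast, ← mul_assoc, ← mul_assoc, ← zpow_add₀ q_ne_zero]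
  ring_nf

lemma cast_choose_two_add_two (n : ℕ) :
    ((n + 2).choose 2 : ℤ) = (n + 1).choose 2 + (n + 1) := by
  rw [Nat.choose_succ_succ', Nat.choose_one_right]
  push_cast
  ring

lemma one_sub_q_pow_mul_sTerm_succ_left (C1 C2 : ℤ) (m n : ℕ) :
    (1 - q ^ (m + 1)) * sTerm C1 C2 (m + 1) n = q ^ (C1 + 2) * sTerm (C1 + 2) (C2 + 1) m n := by
  have hu := one_sub_q_pow_ne_zero m.succ_ne_zero
  have hexp : 2 * ((m + 1 + 1).choose 2 : ℤ) + ((n + 1).choose 2 : ℤ)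
      + ((m + 1 : ℕ) : ℤ) * n + C1 * ((m + 1 : ℕ) : ℤ) + C2 * n
      = (C1 + 2) + (2 * ((m + 1).choose 2 : ℤ) + ((n + 1).choose 2 : ℤ) + (m : ℤ) * n
      + (C1 + 2) * m + (C2 + 1) * n) := by
    rw [cast_choose_two_add_two]
    push_cast
    ring
  rw [sTerm, sTerm, hexp, zpow_add₀ q_ne_zero, poch_succ, mul_inv]
  field_simp

lemma one_sub_q_pow_mul_sTerm_succ_right (C1 C2 : ℤ) (m n : ℕ) :
    (1 - q ^ (n + 1)) * sTerm C1 C2 m (n + 1) = q ^ (C2 + 1) * sTerm (C1 + 1) (C2 + 1) m n := by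
  have hu := one_sub_q_pow_ne_zero n.succ_ne_zero
  have hexp : 2 * ((m + 1).choose 2 : ℤ) + ((n + 1 + 1).choose 2 : ℤ)
      + (m : ℤ) * ((n + 1 : ℕ) : ℤ) + C1 * m + C2 * ((n + 1 : ℕ) : ℤ)
      = (C2 + 1) + (2 * ((m + 1).choose 2 : ℤ) + ((n + 1).choose 2 : ℤ) + (m : ℤ) * n
      + (C1 + 1) * m + (C2 + 1) * n) := by
    rw [cast_choose_two_add_two]
    push_cast
    ring
  rw [sTerm, sTerm, hexp, zpow_add₀ q_ne_zero, poch_succ, mul_inv]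
  field_simp

lemma coeff_X_mul_C_mul (a : R) (f : PowerSeries R) (k : ℕ) :
    coeff (k + 1) (X * C a * f) = a * coeff k f := by
  rw [mul_assoc, coeff_succ_X_mul, coeff_C_mul]

lemma coeff_zero_X_mul_C_mul (a : R) (f : PowerSeries R) : coeff 0 (X * C a * f) = 0 := by
  rw [mul_assoc, coeff_zero_X_mul]

theorem S_eq_S_add_one_left (C1 C2 : ℤ) :
    S C1 C2 = S (C1 + 1) C2 + X * C (q ^ (C1 + 2)) * S (C1 + 2) (C2 + 1) := by
  refine PowerSeries.ext fun k => ?_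
  rcases k with _ | k
  · rw [map_add, coeff_zero_X_mul_C_mul, coeff_zero_S, coeff_zero_S, add_zero]
  · rw [map_add, coeff_X_mul_C_mul, coeff_S, coeff_S, coeff_S, ← sub_eq_iff_eq_add',
      ← sum_sub_distrib, Nat.sum_antidiagonal_succ, mul_sum]
    simp only [sTerm_add_one_left, pow_zero, one_mul, sub_self, zero_add, ← one_sub_mul,
      one_sub_q_pow_mul_sTerm_succ_left]

theorem S_eq_S_add_one_right (C1 C2 : ℤ) :
    S C1 C2 = S C1 (C2 + 1) + X * C (q ^ (C2 + 1)) * S (C1 + 1) (C2 + 1) := by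
  refine PowerSeries.ext fun k => ?_
  rcases k with _ | k
  · rw [map_add, coeff_zero_X_mul_C_mul, coeff_zero_S, coeff_zero_S, add_zero]
  · rw [map_add, coeff_X_mul_C_mul, coeff_S, coeff_S, coeff_S, ← sub_eq_iff_eq_add',
      ← sum_sub_distrib, Nat.sum_antidiagonal_succ', mul_sum]
    simp only [sTerm_add_one_right, pow_zero, one_mul, sub_self, zero_add, ← one_sub_mul,
      one_sub_q_pow_mul_sTerm_succ_right]

theorem subst_q_S (C1 C2 : ℤ) : subst q (S C1 C2) = S (C1 + 1) (C2 + 1) := by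
  refine PowerSeries.ext fun k => ?_
  rw [subst, coeff_mk, coeff_S, coeff_S, mul_sum]
  refine sum_congr rfl fun p hp => ?_
  rw [sTerm_add_one_left, sTerm_add_one_right, ← mul_assoc, ← pow_add,
    HasAntidiagonal.mem_antidiagonal.mp hp]

theorem functional_equation_system :
    S 0 0 = subst q (S 0 0)
        + (PowerSeries.X * PowerSeries.C q
            + PowerSeries.X * PowerSeries.C (q ^ 2)) * subst q (S 1 0) ∧
    S 1 0 = subst q (S 0 0) + PowerSeries.X * PowerSeries.C q * subst q (S 1 0) := by
  have hS00 : S 0 0 = S 1 0 + X * C (q ^ 2) * S 2 1 := by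
    simpa using S_eq_S_add_one_left 0 0
  have hS10 : S 1 0 = S 1 1 + X * C q * S 2 1 := by
    simpa using S_eq_S_add_one_right 1 0
  have hsubst00 : subst q (S 0 0) = S 1 1 := by simpa using subst_q_S 0 0
  have hsubst10 : subst q (S 1 0) = S 2 1 := by simpa using subst_q_S 1 0
  rw [hsubst00, hsubst10]
  refine ⟨?_, hS10⟩
  rw [hS00, hS10]
  ring
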